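/- The integral ∫_0^∞ (e^{-2x} − cos(2x))/x dx converges and equals 0. -/

import Mathlib

/-!
Writing `1 / x = ∫₀^∞ e^{-xt} dt` and swapping the integrals,
`∫₀^T (e^{-x} - cos x) / x dx = ∫₀^∞ (L t + P t T) dt`, where `L t = 1/(1+t) - t/(1+t²)` is the
Laplace transform of `e^{-x} - cos x` and `|P t T| ≤ 3 e^{-Tt}`. The antiderivative
`log (1+t) - log (1+t²) / 2` of `L` vanishes at `0` and, being invariant under `t ↦ t⁻¹`, also
at `∞`; so `∫₀^∞ L = 0` and the truncated integral is `O(1/T)`. The substitution `x ↦ 2x` gives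
the theorem.
-/

open MeasureTheory Filter Real Set Topology

theorem integral_exp_neg_mul_Ioi {x : ℝ} (hx : 0 < x) : ∫ t in Ioi 0, exp (-x * t) = x⁻¹ := by
  rw [integral_exp_mul_Ioi (neg_lt_zero.2 hx), mul_zero, exp_zero, neg_div_neg_eq, one_div]

theorem integrableOn_div_self_Ioc {f : ℝ → ℝ} (hf : Continuous f)
    (hdiff : DifferentiableAt ℝ f 0) (hzero : f 0 = 0) (b : ℝ) :
    IntegrableOn (fun x => f x / x) (Ioc 0 b) := by
  have hslope : Continuous (dslope f 0) :=
    continuousOn_univ.1 ((continuousOn_dslope univ_mem).2 ⟨hf.continuousOn, hdiff⟩)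
  refine (hslope.integrableOn_Icc.mono_set Ioc_subset_Icc_self).congr_fun (fun x hx => ?_)
    measurableSet_Ioc
  rw [dslope_of_ne _ hx.1.ne', slope_def_field, hzero, sub_zero, sub_zero]

theorem integral_div_self_eq_integral_integral_mul_exp {f : ℝ → ℝ} (hf : Measurable f)
    {s : Set ℝ} (hs : MeasurableSet s) (hs₀ : s ⊆ Ioi 0)
    (hfs : IntegrableOn (fun x => f x / x) s) :
    ∫ x in s, f x / x = ∫ t in Ioi 0, ∫ x in s, f x * exp (-x * t) := by
  have hmeas : AEStronglyMeasurable (Function.uncurry fun x t => f x * exp (-x * t))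
      ((volume.restrict s).prod (volume.restrict (Ioi 0))) :=
    Measurable.aestronglyMeasurable (by fun_prop)
  refine Eq.trans ?_ (integral_integral_swap ((integrable_prod_iff hmeas).2 ⟨?_, ?_⟩))
  · refine setIntegral_congr_fun hs fun x hx => ?_
    rw [integral_const_mul, integral_exp_neg_mul_Ioi (hs₀ hx), div_eq_mul_inv]
  · filter_upwards [ae_restrict_mem hs] with x hx
    exact (integrableOn_exp_mul_Ioi (neg_lt_zero.2 (hs₀ hx)) 0).const_mul (f x)
  · refine IntegrableOn.congr_fun hfs.norm (fun x hx => ?_) hs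
    simp only [Function.uncurry_apply_pair, norm_mul, norm_of_nonneg (exp_pos _).le]
    rw [integral_const_mul, integral_exp_neg_mul_Ioi (hs₀ hx), norm_div,
      norm_of_nonneg (hs₀ hx).le, div_eq_mul_inv]

theorem tendsto_integral_comp_mul_div_self {f : ℝ → ℝ} {c : ℝ} (hc : 0 < c) {l : Filter ℝ}
    (h : Tendsto (fun T => ∫ x in 0..T, f x / x) atTop l) :
    Tendsto (fun T => ∫ x in 0..T, f (c * x) / x) atTop l := by
  have hscale (T : ℝ) : ∫ x in 0..T, f (c * x) / x = ∫ x in 0..c * T, f x / x := by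
    simpa only [smul_eq_mul, inv_mul_eq_div, mul_zero] using
      Frullani.integral_comp_mul_inv_smul (f := f) (ε := 0) (r := T) hc.ne'
  simp_rw [hscale]
  exact h.comp (tendsto_id.const_mul_atTop hc)

namespace ExpSubCos

/-- The Laplace transform `t ↦ ∫₀^∞ (e^{-x} - cos x) e^{-xt} dx`. -/
noncomputable def laplace (t : ℝ) : ℝ := (1 + t)⁻¹ - t / (1 + t ^ 2)

noncomputable def laplaceAntideriv (t : ℝ) : ℝ := log (1 + t) - log (1 + t ^ 2) / 2

noncomputable def primitive (t x : ℝ) : ℝ :=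
  -(exp (-x * (1 + t)) / (1 + t)) + exp (-x * t) * (t * cos x - sin x) / (1 + t ^ 2)

theorem hasDerivAt_laplaceAntideriv {t : ℝ} (ht : 1 + t ≠ 0) :
    HasDerivAt laplaceAntideriv (laplace t) t := by
  have hlin : HasDerivAt (fun t : ℝ => 1 + t) 1 t := (hasDerivAt_id t).const_add 1
  have hsq : HasDerivAt (fun t : ℝ => 1 + t ^ 2) (2 * t) t := by
    simpa using (hasDerivAt_pow 2 t).const_add 1
  refine ((hlin.log ht).sub ((hsq.log (by positivity)).div_const 2)).congr_deriv ?_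
  rw [laplace]
  ring

theorem laplaceAntideriv_inv {t : ℝ} (ht : 0 < t) :
    laplaceAntideriv t⁻¹ = laplaceAntideriv t := by
  have h₁ : 1 + t⁻¹ = (1 + t) / t := by field_simp; ring
  have h₂ : 1 + t⁻¹ ^ 2 = (1 + t ^ 2) / t ^ 2 := by field_simp; ring
  rw [laplaceAntideriv, laplaceAntideriv, h₁, h₂, log_div (by positivity) ht.ne',
    log_div (by positivity) (by positivity), log_pow]
  push_cast
  ring

theorem tendsto_laplaceAntideriv_atTop : Tendsto laplaceAntideriv atTop (𝓝 0) := by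
  have hcont : ContinuousAt laplaceAntideriv 0 :=
    (hasDerivAt_laplaceAntideriv (by norm_num)).continuousAt
  have h := hcont.tendsto.comp tendsto_inv_atTop_zero
  rw [show laplaceAntideriv 0 = 0 by simp [laplaceAntideriv]] at h
  refine h.congr' ?_
  filter_upwards [eventually_gt_atTop 0] with t ht
  exact laplaceAntideriv_inv ht

theorem abs_laplace_le {t : ℝ} (ht : 0 ≤ t) : |laplace t| ≤ (1 + t ^ 2)⁻¹ := by
  have hform : laplace t = (1 - t) / ((1 + t) * (1 + t ^ 2)) := by
    rw [laplace]; field_simp; ring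
  have hpos : 0 < (1 + t) * (1 + t ^ 2) := by positivity
  rw [hform, abs_div, abs_of_pos hpos, div_le_iff₀ hpos]
  calc |1 - t| ≤ 1 + t := abs_sub_le_iff.2 ⟨by linarith, by linarith⟩
    _ = (1 + t ^ 2)⁻¹ * ((1 + t) * (1 + t ^ 2)) := by field_simp

theorem integrableOn_laplace : IntegrableOn laplace (Ioi 0) :=
  (integrable_inv_one_add_sq.integrableOn).mono' (by unfold laplace; fun_prop) <|
    (ae_restrict_mem measurableSet_Ioi).mono fun t ht => abs_laplace_le (le_of_lt ht)

theorem integral_laplace : ∫ t in Ioi 0, laplace t = 0 := by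
  rw [integral_Ioi_of_hasDerivAt_of_tendsto' (fun t ht => hasDerivAt_laplaceAntideriv ?_)
    integrableOn_laplace tendsto_laplaceAntideriv_atTop]
  · simp [laplaceAntideriv]
  · have ht : 0 ≤ t := ht
    positivity

theorem hasDerivAt_primitive {t : ℝ} (ht : 1 + t ≠ 0) (x : ℝ) :
    HasDerivAt (primitive t) ((exp (-x) - cos x) * exp (-x * t)) x := by
  have hdamp (c : ℝ) : HasDerivAt (fun x => exp (-x * c)) (-c * exp (-x * c)) x :=
    ((hasDerivAt_neg x).mul_const c).exp.congr_deriv (by ring)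
  have htrig : HasDerivAt (fun x => t * cos x - sin x) (-t * sin x - cos x) x :=
    (((hasDerivAt_cos x).const_mul t).sub (hasDerivAt_sin x)).congr_deriv (by ring)
  have h := ((hdamp (1 + t)).div_const (1 + t)).neg.add
    (((hdamp t).mul htrig).div_const (1 + t ^ 2))
  refine h.congr_deriv ?_
  have hexp : exp (-x * (1 + t)) = exp (-x) * exp (-x * t) := by rw [← exp_add]; ring_nf
  rw [hexp]
  field_simp
  ring

theorem primitive_zero (t : ℝ) : primitive t 0 = -laplace t := by
  simp only [primitive, laplace, neg_zero, zero_mul, exp_zero, cos_zero, sin_zero]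
  ring

theorem integral_Ioc_eq_laplace_add_primitive {t T : ℝ} (ht : 1 + t ≠ 0) (hT : 0 ≤ T) :
    ∫ x in Ioc 0 T, (exp (-x) - cos x) * exp (-x * t) = laplace t + primitive t T := by
  rw [← intervalIntegral.integral_of_le hT, intervalIntegral.integral_eq_sub_of_hasDerivAt
    (fun x _ => hasDerivAt_primitive ht x) (by apply Continuous.intervalIntegrable; fun_prop),
    primitive_zero]
  ring

theorem abs_primitive_le {t T : ℝ} (ht : 0 ≤ t) (hT : 0 ≤ T) :
    |primitive t T| ≤ 3 * exp (-T * t) := by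
  have hdecay : exp (-T * (1 + t)) / (1 + t) ≤ exp (-T * t) := by
    rw [div_le_iff₀ (by positivity)]
    calc exp (-T * (1 + t)) ≤ exp (-T * t) := exp_le_exp.2 (by nlinarith)
      _ ≤ exp (-T * t) * (1 + t) := le_mul_of_one_le_right (exp_pos _).le (by linarith)
  have htrig : |t * cos T - sin T| ≤ 2 * (1 + t ^ 2) := by
    have hc := abs_le.1 (abs_cos_le_one T)
    have hs := abs_le.1 (abs_sin_le_one T)
    rw [abs_le]; constructor <;> nlinarith
  calc |primitive t T|
      ≤ exp (-T * (1 + t)) / (1 + t) + exp (-T * t) * (|t * cos T - sin T| / (1 + t ^ 2)) := by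
        refine (abs_add_le _ _).trans_eq ?_
        rw [abs_neg, abs_div, abs_div, abs_mul, abs_of_pos (exp_pos _), abs_of_pos (exp_pos _),
          abs_of_pos (by positivity : (0 : ℝ) < 1 + t),
          abs_of_pos (by positivity : (0 : ℝ) < 1 + t ^ 2), mul_div_assoc]
    _ ≤ exp (-T * t) + exp (-T * t) * 2 := by
        gcongr
        rwa [div_le_iff₀ (by positivity)]
    _ = 3 * exp (-T * t) := by ring

theorem integrableOn_primitive {T : ℝ} (hT : 0 < T) :
    IntegrableOn (fun t => primitive t T) (Ioi 0) :=
  ((integrableOn_exp_mul_Ioi (neg_lt_zero.2 hT) 0).const_mul 3).mono'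
    (by unfold primitive; fun_prop)
    ((ae_restrict_mem measurableSet_Ioi).mono fun _ ht => abs_primitive_le (le_of_lt ht) hT.le)

theorem norm_integral_primitive_le {T : ℝ} (hT : 0 < T) :
    ‖∫ t in Ioi 0, primitive t T‖ ≤ 3 * T⁻¹ := by
  refine (norm_integral_le_of_norm_le
    ((integrableOn_exp_mul_Ioi (neg_lt_zero.2 hT) 0).const_mul 3)
    ((ae_restrict_mem measurableSet_Ioi).mono fun _ ht => abs_primitive_le (le_of_lt ht) hT.le)
    ).trans_eq ?_
  rw [integral_const_mul, integral_exp_neg_mul_Ioi hT]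

end ExpSubCos

open ExpSubCos in
theorem tendsto_integral_exp_neg_sub_cos_div_self :
    Tendsto (fun T => ∫ x in 0..T, (exp (-x) - cos x) / x) atTop (𝓝 0) := by
  have hF : Continuous fun x : ℝ => exp (-x) - cos x := by fun_prop
  refine squeeze_zero_norm' ?_ (by simpa using (tendsto_inv_atTop_zero (𝕜 := ℝ)).const_mul 3)
  filter_upwards [eventually_gt_atTop 0] with T hT
  rw [intervalIntegral.integral_of_le hT.le, integral_div_self_eq_integral_integral_mul_exp
      hF.measurable measurableSet_Ioc (fun _ hx => hx.1)
      (integrableOn_div_self_Ioc hF (by fun_prop) (by simp) T),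
    setIntegral_congr_fun measurableSet_Ioi
      (fun t (ht : 0 < t) => integral_Ioc_eq_laplace_add_primitive (by positivity) hT.le),
    integral_add integrableOn_laplace (integrableOn_primitive hT), integral_laplace, zero_add]
  exact norm_integral_primitive_le hT

/-- The improper integral `∫₀^∞ (e^{-2x} − cos(2x))/x dx` converges (as the limit of
`∫₀^T` as `T → ∞`) and equals `0`. -/
theorem integral_exp_sub_cos_div_self :
    Tendsto (fun T : ℝ => ∫ x in (0:ℝ)..T, (Real.exp (-2 * x) - Real.cos (2 * x)) / x)
      atTop (nhds 0) := by
  simpa only [neg_mul] using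
    tendsto_integral_comp_mul_div_self two_pos tendsto_integral_exp_neg_sub_cos_div_self
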